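/- Let 1 < β < 2. Then for every integer N ≥ 2, the partial sum Σ_{k=0}^{N} ω_k^{(β)} < 0. -/

import Mathlib

open Finset

/-- The coefficients `g_k^{(γ)}`: `g_0 = 1`, `g_k = (1 - (γ+1)/k) g_{k-1}` for `k ≥ 1`. -/
noncomputable def gcoef (γ : ℝ) : ℕ → ℝ
  | 0 => 1
  | k + 1 => (1 - (γ + 1) / (k + 1)) * gcoef γ k

/-- The coefficients `ω_k^{(γ)}`: `ω_0 = (γ/2) g_0` and
`ω_k = (γ/2) g_k + ((2-γ)/2) g_{k-1}` for `k ≥ 1`. -/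
noncomputable def wcoef (γ : ℝ) : ℕ → ℝ
  | 0 => γ / 2 * gcoef γ 0
  | k + 1 => γ / 2 * gcoef γ (k + 1) + (2 - γ) / 2 * gcoef γ k

/-!
`g_k^{(γ)}` is the `k`-th Taylor coefficient of `(1 - z)^(γ+1)`, so dividing by `1 - z` shows that
the partial sums of `g^{(γ)}` are the coefficients `g^{(γ-1)}`. Hence the partial sum
`∑_{k ≤ N} ω_k^{(β)}` equals `(β/2) g_N^{(β-1)} + ((2-β)/2) g_{N-1}^{(β-1)}
= g_{N-1}^{(β-1)} (1 - β² / (2N))`. For `1 < β < 2` the first factor is negative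
(its first recursion factor is `1 - β < 0`, all later ones are positive) and the second is positive
because `β² < 4 ≤ 2N`.
-/

theorem gcoef_zero (γ : ℝ) : gcoef γ 0 = 1 := rfl

theorem gcoef_succ (γ : ℝ) (n : ℕ) :
    gcoef γ (n + 1) = (1 - (γ + 1) / (n + 1)) * gcoef γ n := rfl

theorem gcoef_succ_eq_mul_gcoef_sub_one (γ : ℝ) (n : ℕ) :
    gcoef γ (n + 1) = -(γ / (n + 1)) * gcoef (γ - 1) n := by
  induction n with
  | zero => simp [gcoef]
  | succ n ih =>
    rw [gcoef_succ, ih, gcoef_succ]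
    push_cast
    field_simp
    ring

theorem gcoef_succ_eq_sub (γ : ℝ) (n : ℕ) :
    gcoef γ (n + 1) = gcoef (γ - 1) (n + 1) - gcoef (γ - 1) n := by
  rw [gcoef_succ_eq_mul_gcoef_sub_one, gcoef_succ, sub_add_cancel]
  ring

theorem sum_range_gcoef (γ : ℝ) (n : ℕ) :
    ∑ k ∈ range (n + 1), gcoef γ k = gcoef (γ - 1) n := by
  induction n with
  | zero => simp [gcoef_zero]
  | succ n ih => rw [sum_range_succ, ih, gcoef_succ_eq_sub, add_sub_cancel]

theorem sum_range_wcoef (β : ℝ) (n : ℕ) :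
    ∑ k ∈ range (n + 2), wcoef β k
      = β / 2 * gcoef (β - 1) (n + 1) + (2 - β) / 2 * gcoef (β - 1) n := by
  rw [← sum_range_gcoef, ← sum_range_gcoef, sum_range_succ', sum_range_succ' (gcoef β)]
  simp only [wcoef, sum_add_distrib, ← mul_sum]
  ring

theorem gcoef_succ_neg {γ : ℝ} (hγ0 : 0 < γ) (hγ1 : γ < 1) (n : ℕ) : gcoef γ (n + 1) < 0 := by
  induction n with
  | zero =>
    rw [zero_add, gcoef_succ, gcoef_zero]
    norm_num
    linarith
  | succ n ih =>
    rw [gcoef_succ]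
    refine mul_neg_of_pos_of_neg ?_ ih
    rw [sub_pos, div_lt_one (by positivity)]
    push_cast
    linarith [(n.cast_nonneg : (0 : ℝ) ≤ n)]

theorem stmt9 (β : ℝ) (hβ1 : 1 < β) (hβ2 : β < 2) :
    ∀ N : ℕ, 2 ≤ N → ∑ k ∈ Finset.range (N + 1), wcoef β k < 0 := by
  intro N hN
  obtain ⟨n, rfl⟩ := Nat.exists_eq_add_of_le' hN
  have hfactor : ∑ k ∈ range (n + 2 + 1), wcoef β k
      = gcoef (β - 1) (n + 1) * (1 - β ^ 2 / (2 * (n + 2))) := by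
    rw [sum_range_wcoef, gcoef_succ]
    push_cast
    field_simp
    ring
  have hratio_lt_one : β ^ 2 / (2 * (n + 2)) < 1 := by
    rw [div_lt_one (by positivity)]
    nlinarith [(n.cast_nonneg : (0 : ℝ) ≤ n)]
  rw [hfactor]
  exact mul_neg_of_neg_of_pos (gcoef_succ_neg (by linarith) (by linarith) n) (by linarith)
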